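/- (Convergence of random series.) Let {X_i} be a sequence of independent random variables in a sublinear expectation space (Ω, H, Ê) with Ê regular, indicators of events lying in H, and V(A) := Ê(1_A) the continuous capacity generated by Ê. If Ê(X_i) = ε̂(X_i) = 0 for every i and Σ_{i=1}^∞ Ê(X_i²) < ∞, then the series Σ_{i=1}^∞ X_i converges almost surely with respect to V, i.e. V({ω : Σ_{i=1}^n X_i(ω) does not converge as n → ∞}) = 0. -/

import Mathlib

/-!
The proof goes through Kolmogorov's maximal inequality. Fix `m`, let `S_n = X_{m+1} + ⋯ + X_n`,
`M_n = max_{r ≤ n} |S_r|` and `Φ = stoppedSq e`. Updating the running maximum can only decrease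
`Φ`, so `Φ(M_{n+1}, S_{n+1}) ≤ Φ(M_n, S_n + X_{n+1})`. By independence, `Ê` of the right side is
computed by first freezing `(M_n, S_n)`; since `Ê X_{n+1} = ε̂ X_{n+1} = 0` the cross term drops
out, and `Ê Φ(M_{n+1}, S_{n+1}) ≤ Ê Φ(M_n, S_n) + Ê X_{n+1}²`. As `Φ(M, S) = (e/2)²` once `M ≥ e`,
Chebyshev gives `V(M_n ≥ e) ≤ (2/e)² ∑_{i > m} Ê X_i²`. Continuity of `V` from below lets
`n → ∞`, the tail sums vanish as `m → ∞`, and the divergence set is the increasing union over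
`e = 1/(j+1)` of the events that the partial sums oscillate by `e` after every time.
-/

open Filter MeasureTheory Set

/-- The class `C_{l,Lip}` of local Lipschitz functions:
`|φ(x) − φ(y)| ≤ C (1 + ‖x‖^m + ‖y‖^m) ‖x − y‖` for some `C > 0` and `m : ℕ`. -/
def LocLip {α : Type*} [NormedAddCommGroup α] (φ : α → ℝ) : Prop :=
  ∃ C : ℝ, 0 < C ∧ ∃ m : ℕ, ∀ x y : α,
    |φ x - φ y| ≤ C * (1 + ‖x‖ ^ m + ‖y‖ ^ m) * ‖x - y‖

/-- A sublinear expectation space `(Ω, H, Ê)`: `H` is a set of real functions on `Ω`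
containing constants, stable under composition with `C_{l,Lip}` functions, and
`E` is monotone, constant preserving, subadditive and positively homogeneous on `H`. -/
structure SubLinExp (Ω : Type*) where
  H : Set (Ω → ℝ)
  E : (Ω → ℝ) → ℝ
  const_mem : ∀ c : ℝ, (fun _ => c) ∈ H
  comp_mem : ∀ (n : ℕ) (X : Fin n → Ω → ℝ), (∀ i, X i ∈ H) →
    ∀ φ : (Fin n → ℝ) → ℝ, LocLip φ → (fun ω => φ (fun i => X i ω)) ∈ H
  mono : ∀ X ∈ H, ∀ Y ∈ H, (∀ ω, Y ω ≤ X ω) → E Y ≤ E X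
  const : ∀ c : ℝ, E (fun _ => c) = c
  subadd : ∀ X ∈ H, ∀ Y ∈ H, E (fun ω => X ω + Y ω) ≤ E X + E Y
  homog : ∀ l : ℝ, 0 ≤ l → ∀ X ∈ H, E (fun ω => l * X ω) = l * E X

/-- `Y` is independent of the random vector `X = (X₁,…,X_m)`:
`Ê(φ(X,Y)) = Ê(ψ(X))` where `ψ(x) = Ê(φ(x,Y))`, for all `φ ∈ C_{l,Lip}`. -/
def IndepVecOf {Ω : Type*} (S : SubLinExp Ω) {m : ℕ} (Y : Ω → ℝ)
    (X : Fin m → Ω → ℝ) : Prop :=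
  ∀ φ : (Fin m → ℝ) → ℝ → ℝ, LocLip (fun q : (Fin m → ℝ) × ℝ => φ q.1 q.2) →
    S.E (fun ω => φ (fun i => X i ω) (Y ω)) =
      S.E (fun ω => S.E (fun ω' => φ (fun i => X i ω) (Y ω')))

/-- The (1-based) sequence `X₁, X₂, …` is independent:
`X_{i+1}` is independent of `(X₁,…,X_i)` for each `i ≥ 1`. -/
def IndepSeq1 {Ω : Type*} (S : SubLinExp Ω) (X : ℕ → Ω → ℝ) : Prop :=
  ∀ i : ℕ, 1 ≤ i → IndepVecOf S (X (i + 1)) (fun j : Fin i => X ((j : ℕ) + 1))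

/-- The (1-based) finite sequence `X₁,…,Xₙ` is independent. -/
def IndepUpTo1 {Ω : Type*} (S : SubLinExp Ω) (X : ℕ → Ω → ℝ) (n : ℕ) : Prop :=
  ∀ i : ℕ, 1 ≤ i → i + 1 ≤ n → IndepVecOf S (X (i + 1)) (fun j : Fin i => X ((j : ℕ) + 1))

/-- The (1-based) sequence `X₁, X₂, …` is identically distributed. -/
def IdentDist1 {Ω : Type*} (S : SubLinExp Ω) (X : ℕ → Ω → ℝ) : Prop :=
  ∀ i : ℕ, 1 ≤ i → ∀ φ : ℝ → ℝ, LocLip φ →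
    S.E (fun ω => φ (X i ω)) = S.E (fun ω => φ (X 1 ω))

/-- A capacity `V` is continuous: `V(Aₙ) ↑ V(A)` if `Aₙ ↑ A` and `V(Aₙ) ↓ V(A)` if `Aₙ ↓ A`. -/
def ContCapacity {Ω : Type*} (V : Set Ω → ℝ) : Prop :=
  (∀ A : ℕ → Set Ω, Monotone A →
    Tendsto (fun n => V (A n)) atTop (nhds (V (⋃ n, A n)))) ∧
  (∀ A : ℕ → Set Ω, Antitone A →
    Tendsto (fun n => V (A n)) atTop (nhds (V (⋂ n, A n))))

/-- The upper capacity generated by a sublinear expectation: `V(A) = Ê(1_A)`. -/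
noncomputable def genV {Ω : Type*} (S : SubLinExp Ω) : Set Ω → ℝ :=
  fun A => S.E (A.indicator fun _ => (1 : ℝ))

/-- The Choquet integral `C_V(Z) = ∫₀^∞ V(Z ≥ t) dt` of a nonnegative random variable. -/
noncomputable def choquet {Ω : Type*} (V : Set Ω → ℝ) (Z : Ω → ℝ) : ENNReal :=
  ∫⁻ t in Set.Ioi (0 : ℝ), ENNReal.ofReal (V {ω | t ≤ Z ω})

/-- The sublinear expectation `Ê` is regular: `Ê(Xₙ) ↓ 0` whenever `Xₙ(ω) ↓ 0` for every `ω`. -/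
def Regular {Ω : Type*} (S : SubLinExp Ω) : Prop :=
  ∀ X : ℕ → Ω → ℝ, (∀ n, X n ∈ S.H) → (∀ ω, Antitone fun n => X n ω) →
    (∀ ω, Tendsto (fun n => X n ω) atTop (nhds 0)) →
    Tendsto (fun n => S.E (X n)) atTop (nhds 0)

open scoped NNReal

namespace LocLip

variable {α β : Type*} [NormedAddCommGroup α] [NormedAddCommGroup β]

theorem of_lipschitzWith {g : α → ℝ} {K : ℝ≥0} (hg : LipschitzWith K g) : LocLip g := by
  refine ⟨K + 1, by positivity, 0, fun x y => ?_⟩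
  have h := hg.dist_le_mul x y
  rw [Real.dist_eq, dist_eq_norm] at h
  nlinarith [norm_nonneg (x - y)]

theorem comp_lipschitzWith {g : β → ℝ} (hg : LocLip g) {F : α → β} {K : ℝ≥0}
    (hF : LipschitzWith K F) (hF0 : F 0 = 0) : LocLip fun x => g (F x) := by
  obtain ⟨C, hC, m, h⟩ := hg
  refine ⟨C * (K + 1) * (1 + K ^ m), by positivity, m, fun x y => ?_⟩
  have hnorm : ∀ z, ‖F z‖ ≤ K * ‖z‖ := fun z => by
    simpa [hF0, dist_eq_norm] using hF.dist_le_mul z 0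
  have hpow : ∀ z, ‖F z‖ ^ m ≤ K ^ m * ‖z‖ ^ m := fun z => by
    rw [← mul_pow]; exact pow_le_pow_left₀ (norm_nonneg _) (hnorm z) m
  have hdist : ‖F x - F y‖ ≤ (K + 1) * ‖x - y‖ := by
    have := hF.dist_le_mul x y
    rw [dist_eq_norm, dist_eq_norm] at this
    nlinarith [norm_nonneg (x - y)]
  have hpoly : 1 + ‖F x‖ ^ m + ‖F y‖ ^ m ≤ (1 + K ^ m) * (1 + ‖x‖ ^ m + ‖y‖ ^ m) := by
    nlinarith [hpow x, hpow y, pow_nonneg K.coe_nonneg m, pow_nonneg (norm_nonneg x) m,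
      pow_nonneg (norm_nonneg y) m]
  calc |g (F x) - g (F y)| ≤ C * (1 + ‖F x‖ ^ m + ‖F y‖ ^ m) * ‖F x - F y‖ := h _ _
    _ ≤ C * ((1 + K ^ m) * (1 + ‖x‖ ^ m + ‖y‖ ^ m)) * ((K + 1) * ‖x - y‖) := by gcongr
    _ = C * (K + 1) * (1 + K ^ m) * (1 + ‖x‖ ^ m + ‖y‖ ^ m) * ‖x - y‖ := by ring

end LocLip

theorem locLip_sq : LocLip (fun t : ℝ => t ^ 2) := by
  refine ⟨1, one_pos, 1, fun x y => ?_⟩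
  simp only [Real.norm_eq_abs, pow_one, one_mul]
  rw [sq_sub_sq, abs_mul]
  gcongr
  linarith [abs_add_le x y, abs_nonneg x]

theorem lipschitzWith_finset_sum {α ι E : Type*} [PseudoEMetricSpace α]
    [SeminormedAddCommGroup E] {f : ι → α → E} {K : ι → ℝ≥0} (s : Finset ι)
    (hf : ∀ i ∈ s, LipschitzWith (K i) (f i)) :
    LipschitzWith (∑ i ∈ s, K i) (fun x => ∑ i ∈ s, f i x) := by
  classical
  induction s using Finset.induction_on with
  | empty => simpa using LipschitzWith.const (0 : E)
  | insert a s ha ih =>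
    simp only [Finset.sum_insert ha]
    exact (hf a (Finset.mem_insert_self a s)).add
      (ih fun i hi => hf i (Finset.mem_insert_of_mem hi))

/-- `maxPartialSum a m n = max_{r ≤ n} |a m + ⋯ + a (r - 1)|`, the sums over `r ≤ m` being empty. -/
noncomputable def maxPartialSum (a : ℕ → ℝ) (m : ℕ) : ℕ → ℝ
  | 0 => 0
  | n + 1 => max (maxPartialSum a m n) |∑ i ∈ Finset.Ico m (n + 1), a i|

namespace maxPartialSum

variable (a : ℕ → ℝ) (m : ℕ)

theorem succ (n : ℕ) :
    maxPartialSum a m (n + 1) = max (maxPartialSum a m n) |∑ i ∈ Finset.Ico m (n + 1), a i| :=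
  rfl

theorem nonneg (n : ℕ) : 0 ≤ maxPartialSum a m n := by
  induction n with
  | zero => exact le_rfl
  | succ n ih => exact ih.trans (le_max_left _ _)

theorem eq_zero_of_le {n : ℕ} (h : n ≤ m) : maxPartialSum a m n = 0 := by
  induction n with
  | zero => rfl
  | succ n ih =>
    rw [succ, ih (by omega), Finset.Ico_eq_empty_of_le h]
    simp

theorem monotone : Monotone (maxPartialSum a m) :=
  monotone_nat_of_le_succ fun _ => le_max_left _ _

theorem abs_sum_le {r n : ℕ} (h : r ≤ n) : |∑ i ∈ Finset.Ico m r, a i| ≤ maxPartialSum a m n := by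
  refine le_trans ?_ (monotone a m h)
  cases r with
  | zero => simp [nonneg]
  | succ r => exact le_max_right _ _

theorem congr {a b : ℕ → ℝ} {n : ℕ} (h : ∀ i < n, a i = b i) :
    maxPartialSum a m n = maxPartialSum b m n := by
  induction n with
  | zero => rfl
  | succ n ih =>
    rw [succ, succ, ih fun i hi => h i (by omega),
      Finset.sum_congr rfl fun i hi => h i (Finset.mem_Ico.mp hi).2]

theorem zero_left (n : ℕ) : maxPartialSum 0 m n = 0 := by
  induction n with
  | zero => rfl
  | succ n ih => simp [succ, ih]

end maxPartialSum

section PathLipschitz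

variable {α : Type*} [PseudoEMetricSpace α] {a : α → ℕ → ℝ}

theorem lipschitzWith_sum_Ico (ha : ∀ i, LipschitzWith 1 (fun x => a x i)) (m n : ℕ) :
    LipschitzWith n (fun x => ∑ i ∈ Finset.Ico m n, a x i) := by
  refine (lipschitzWith_finset_sum _ fun i _ => ha i).weaken ?_
  simp

theorem lipschitzWith_maxPartialSum (ha : ∀ i, LipschitzWith 1 (fun x => a x i)) (m n : ℕ) :
    LipschitzWith n (fun x => maxPartialSum (a x) m n) := by
  induction n with
  | zero => exact (LipschitzWith.const (α := α) (0 : ℝ)).weaken (by simp)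
  | succ n ih =>
    have habs : LipschitzWith (n + 1) (fun x => |∑ i ∈ Finset.Ico m (n + 1), a x i|) := by
      simpa [Function.comp_def] using
        lipschitzWith_one_norm.comp (lipschitzWith_sum_Ico ha m (n + 1))
    exact (ih.max habs).weaken (by simp)

end PathLipschitz

def zeroExtend {k : ℕ} (x : Fin k → ℝ) (i : ℕ) : ℝ := if h : i < k then x ⟨i, h⟩ else 0

theorem zeroExtend_of_lt {k : ℕ} (x : Fin k → ℝ) {i : ℕ} (h : i < k) : zeroExtend x i = x ⟨i, h⟩ :=
  dif_pos h

theorem zeroExtend_zero (k : ℕ) : zeroExtend (0 : Fin k → ℝ) = 0 := by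
  funext i; simp [zeroExtend]

theorem lipschitzWith_zeroExtend_apply (k i : ℕ) :
    LipschitzWith 1 (fun x : Fin k → ℝ => zeroExtend x i) := by
  by_cases h : i < k
  · simpa [zeroExtend, h] using LipschitzWith.eval (α := fun _ : Fin k => ℝ) ⟨i, h⟩
  · simpa [zeroExtend, h] using LipschitzWith.const' (α := Fin k → ℝ) (K := 1) (0 : ℝ)

theorem lipschitzWith_zeroExtend_fst_apply (k i : ℕ) :
    LipschitzWith 1 (fun q : (Fin k → ℝ) × ℝ => zeroExtend q.1 i) := by
  simpa [Function.comp_def] using (lipschitzWith_zeroExtend_apply k i).comp LipschitzWith.prod_fst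

noncomputable def cutoff (e t : ℝ) : ℝ := min 1 (max 0 (2 * t / e - 1))

section cutoff

variable {e : ℝ}

theorem cutoff_nonneg (t : ℝ) : 0 ≤ cutoff e t := le_min zero_le_one (le_max_left _ _)

theorem cutoff_le_one (t : ℝ) : cutoff e t ≤ 1 := min_le_left _ _

theorem cutoff_mono (he : 0 < e) : Monotone (cutoff e) := fun _ _ h => by
  unfold cutoff; gcongr

theorem cutoff_eq_zero (he : 0 < e) {t : ℝ} (h : t ≤ e / 2) : cutoff e t = 0 := by
  have : 2 * t / e - 1 ≤ 0 := by rw [sub_nonpos, div_le_one he]; linarith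
  simp [cutoff, this]

theorem cutoff_eq_one (he : 0 < e) {t : ℝ} (h : e ≤ t) : cutoff e t = 1 := by
  have : 1 ≤ 2 * t / e - 1 := by rw [le_sub_iff_add_le, le_div_iff₀ he]; linarith
  simp [cutoff, le_max_of_le_right this]

theorem abs_cutoff_sub_le (he : 0 < e) (a b : ℝ) :
    |cutoff e a - cutoff e b| ≤ 2 / e * |a - b| := by
  calc |cutoff e a - cutoff e b| ≤ |(2 * a / e - 1) - (2 * b / e - 1)| := by
        refine (abs_min_sub_min_le_max _ _ _ _).trans ?_
        rw [sub_self, abs_zero, max_eq_right (abs_nonneg _)]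
        refine (abs_max_sub_max_le_max _ _ _ _).trans ?_
        rw [sub_self, abs_zero, max_eq_right (abs_nonneg _)]
    _ = 2 / e * |a - b| := by
        rw [show 2 * a / e - 1 - (2 * b / e - 1) = 2 / e * (a - b) by ring, abs_mul,
          abs_of_pos (by positivity)]

theorem lipschitzWith_cutoff (he : 0 < e) : LipschitzWith (2 / e).toNNReal (cutoff e) :=
  LipschitzWith.of_dist_le' fun a b => by simpa only [Real.dist_eq] using abs_cutoff_sub_le he a b

end cutoff

/-- `s ^ 2` stopped, in a locally Lipschitz way, once the running maximum `a` of `|s|` reaches `e`: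
it is `s ^ 2` while `a ≤ e / 2` and `(e / 2) ^ 2` once `a ≥ e`. A sharp stopping rule would not
be locally Lipschitz, so its composition with the partial sums need not lie in `H`. -/
noncomputable def stoppedSq (e a s : ℝ) : ℝ := (1 - cutoff e a) * s ^ 2 + cutoff e a * (e / 2) ^ 2

section stoppedSq

variable {e : ℝ}

theorem stoppedSq_nonneg (a s : ℝ) : 0 ≤ stoppedSq e a s :=
  add_nonneg (mul_nonneg (sub_nonneg.2 (cutoff_le_one a)) (sq_nonneg s))
    (mul_nonneg (cutoff_nonneg a) (sq_nonneg _))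

theorem stoppedSq_zero_zero (he : 0 < e) : stoppedSq e 0 0 = 0 := by
  simp [stoppedSq, cutoff_eq_zero he (by linarith : (0 : ℝ) ≤ e / 2)]

theorem stoppedSq_of_le (he : 0 < e) {a : ℝ} (h : e ≤ a) (s : ℝ) :
    stoppedSq e a s = (e / 2) ^ 2 := by
  simp [stoppedSq, cutoff_eq_one he h]

theorem stoppedSq_max_abs_le (he : 0 < e) (a s : ℝ) :
    stoppedSq e (max a |s|) s ≤ stoppedSq e a s := by
  rcases le_total |s| a with h | h
  · rw [max_eq_left h]
  rw [max_eq_right h]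
  suffices (cutoff e a - cutoff e |s|) * (s ^ 2 - (e / 2) ^ 2) ≤ 0 by
    unfold stoppedSq; linarith
  have hmono := cutoff_mono he h
  rcases le_or_gt (e / 2) |s| with hs | hs
  · have : (e / 2) ^ 2 ≤ s ^ 2 := by rw [← sq_abs s]; gcongr
    exact mul_nonpos_of_nonpos_of_nonneg (by linarith) (by linarith)
  · have h0 : cutoff e |s| = 0 := cutoff_eq_zero he hs.le
    have : cutoff e a = 0 := le_antisymm (h0 ▸ hmono) (cutoff_nonneg a)
    simp [h0, this]

theorem locLip_stoppedSq (he : 0 < e) : LocLip (fun p : ℝ × ℝ => stoppedSq e p.1 p.2) := by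
  set c := (e / 2) ^ 2
  refine ⟨1 + 2 / e * (1 + c), by positivity, 2, fun p q => ?_⟩
  have h1 : |p.1 - q.1| ≤ ‖p - q‖ := norm_fst_le (p - q)
  have h2 : |p.2 - q.2| ≤ ‖p - q‖ := norm_snd_le (p - q)
  have hp : |p.2| ≤ ‖p‖ := norm_snd_le p
  have hq : |q.2| ≤ ‖q‖ := norm_snd_le q
  have hsq : |p.2 ^ 2 - q.2 ^ 2| ≤ (‖p‖ + ‖q‖) * ‖p - q‖ := by
    rw [sq_sub_sq, abs_mul]
    gcongr
    exact (abs_add_le _ _).trans (add_le_add hp hq)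
  have hcut : |cutoff e q.1 - cutoff e p.1| ≤ 2 / e * ‖p - q‖ := by
    rw [abs_sub_comm]; exact (abs_cutoff_sub_le he _ _).trans (by gcongr)
  have hc0 : 0 ≤ c := by positivity
  have hc : |q.2 ^ 2 - c| ≤ ‖q‖ ^ 2 + c := by
    have : q.2 ^ 2 ≤ ‖q‖ ^ 2 := by rw [← sq_abs]; gcongr
    rw [abs_le]; constructor <;> nlinarith [sq_nonneg q.2]
  have h01 : |1 - cutoff e p.1| ≤ 1 := by
    rw [abs_le]; constructor <;> linarith [cutoff_nonneg (e := e) p.1, cutoff_le_one (e := e) p.1]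
  have hsplit : stoppedSq e p.1 p.2 - stoppedSq e q.1 q.2 =
      (1 - cutoff e p.1) * (p.2 ^ 2 - q.2 ^ 2) + (cutoff e q.1 - cutoff e p.1) * (q.2 ^ 2 - c) := by
    unfold stoppedSq; ring
  have hP := norm_nonneg p
  have hQ := norm_nonneg q
  have hD := norm_nonneg (p - q)
  calc |stoppedSq e p.1 p.2 - stoppedSq e q.1 q.2|
      ≤ 1 * ((‖p‖ + ‖q‖) * ‖p - q‖) + 2 / e * ‖p - q‖ * (‖q‖ ^ 2 + c) := by
        rw [hsplit]
        refine (abs_add_le _ _).trans (add_le_add ?_ ?_) <;> rw [abs_mul]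
        · exact mul_le_mul h01 hsq (abs_nonneg _) zero_le_one
        · exact mul_le_mul hcut hc (abs_nonneg _) (by positivity)
    _ ≤ (1 + 2 / e * (1 + c)) * (1 + ‖p‖ ^ 2 + ‖q‖ ^ 2) * ‖p - q‖ := by
        have hsum : ‖p‖ + ‖q‖ ≤ 1 + ‖p‖ ^ 2 + ‖q‖ ^ 2 := by
          nlinarith [sq_nonneg (‖p‖ - 1), sq_nonneg (‖q‖ - 1)]
        have hq2 : ‖q‖ ^ 2 + c ≤ (1 + c) * (1 + ‖p‖ ^ 2 + ‖q‖ ^ 2) := by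
          nlinarith [mul_nonneg hc0 (sq_nonneg ‖p‖), mul_nonneg hc0 (sq_nonneg ‖q‖), sq_nonneg ‖p‖]
        have hL : 0 ≤ 2 / e := by positivity
        nlinarith [mul_le_mul_of_nonneg_right hsum hD,
          mul_le_mul_of_nonneg_left hq2 (mul_nonneg hL hD)]

end stoppedSq

namespace SubLinExp

variable {Ω : Type*} (S : SubLinExp Ω) {f g Y : Ω → ℝ}

/-- `Ê Y = ε̂ Y = 0`. -/
def MeanZero (Y : Ω → ℝ) : Prop := S.E Y = 0 ∧ S.E (fun ω => -Y ω) = 0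

theorem comp_mem₁ (hf : f ∈ S.H) {φ : ℝ → ℝ} (hφ : LocLip φ) : (fun ω => φ (f ω)) ∈ S.H :=
  S.comp_mem 1 (fun _ => f) (fun _ => hf) (fun v => φ (v 0))
    (hφ.comp_lipschitzWith (LipschitzWith.eval 0) rfl)

theorem comp_mem₂ (hf : f ∈ S.H) (hg : g ∈ S.H) {φ : ℝ → ℝ → ℝ}
    (hφ : LocLip fun p : ℝ × ℝ => φ p.1 p.2) : (fun ω => φ (f ω) (g ω)) ∈ S.H :=
  S.comp_mem 2 ![f, g] (Fin.forall_fin_two.2 ⟨hf, hg⟩) (fun v => φ (v 0) (v 1))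
    (hφ.comp_lipschitzWith (F := fun v : Fin 2 → ℝ => (v 0, v 1))
      ((LipschitzWith.eval 0).prodMk (LipschitzWith.eval 1)) rfl)

theorem add_mem (hf : f ∈ S.H) (hg : g ∈ S.H) : (fun ω => f ω + g ω) ∈ S.H :=
  S.comp_mem₂ hf hg (LocLip.of_lipschitzWith (LipschitzWith.prod_fst.add LipschitzWith.prod_snd))

theorem const_mul_mem (c : ℝ) (hf : f ∈ S.H) : (fun ω => c * f ω) ∈ S.H :=
  S.comp_mem₁ hf (LocLip.of_lipschitzWith (lipschitzWith_smul c))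

theorem E_nonneg (hf : f ∈ S.H) (h : ∀ ω, 0 ≤ f ω) : 0 ≤ S.E f := by
  simpa [S.const] using S.mono f hf _ (S.const_mem 0) h

theorem E_add_const (hf : f ∈ S.H) (c : ℝ) : S.E (fun ω => f ω + c) = S.E f + c := by
  have hle := S.subadd f hf _ (S.const_mem c)
  have hge := S.subadd _ (S.add_mem hf (S.const_mem c)) _ (S.const_mem (-c))
  simp only [S.const, add_neg_cancel_right] at hle hge
  linarith

theorem E_add_of_meanZero (hf : f ∈ S.H) (hY : Y ∈ S.H) (hY0 : S.MeanZero Y) :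
    S.E (fun ω => f ω + Y ω) = S.E f := by
  have hle := S.subadd f hf Y hY
  have hge := S.subadd _ (S.add_mem hf hY) _ (S.const_mul_mem (-1) hY)
  simp only [neg_one_mul, add_neg_cancel_right] at hge
  linarith [hY0.1, hY0.2]

theorem MeanZero.const_mul (hY : Y ∈ S.H) (hY0 : S.MeanZero Y) (c : ℝ) :
    S.E (fun ω => c * Y ω) = 0 := by
  rcases le_total 0 c with hc | hc
  · rw [S.homog c hc Y hY, hY0.1, mul_zero]
  · have := S.homog (-c) (neg_nonneg.2 hc) _ (S.const_mul_mem (-1) hY)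
    simp only [neg_one_mul, neg_mul_neg] at this
    rw [this, hY0.2, mul_zero]

theorem E_add_sq_of_meanZero (hY : Y ∈ S.H) (hY0 : S.MeanZero Y) (s : ℝ) :
    S.E (fun ω => (s + Y ω) ^ 2) = s ^ 2 + S.E (fun ω => Y ω ^ 2) := by
  have hY2 : (fun ω => Y ω ^ 2) ∈ S.H := S.comp_mem₁ hY locLip_sq
  have hZ0 : S.MeanZero (fun ω => 2 * s * Y ω) := by
    refine ⟨hY0.const_mul S hY _, ?_⟩
    simpa only [neg_mul] using hY0.const_mul S hY (-(2 * s))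
  calc S.E (fun ω => (s + Y ω) ^ 2)
      = S.E (fun ω => (Y ω ^ 2 + s ^ 2) + 2 * s * Y ω) := by congr 1; ext ω; ring
    _ = s ^ 2 + S.E (fun ω => Y ω ^ 2) := by
        rw [S.E_add_of_meanZero (S.add_mem hY2 (S.const_mem _)) (S.const_mul_mem _ hY) hZ0,
          S.E_add_const hY2, add_comm]

theorem E_stoppedSq_add_of_meanZero (hY : Y ∈ S.H) (hY0 : S.MeanZero Y) (e a s : ℝ) :
    S.E (fun ω => stoppedSq e a (s + Y ω)) =
      stoppedSq e a s + S.E (fun ω => Y ω ^ 2) * (1 - cutoff e a) := by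
  have hsq : (fun ω => (s + Y ω) ^ 2) ∈ S.H := S.comp_mem₁ (S.add_mem (S.const_mem s) hY) locLip_sq
  unfold stoppedSq
  rw [S.E_add_const (S.const_mul_mem _ hsq),
    S.homog _ (sub_nonneg.2 (cutoff_le_one a)) _ hsq, S.E_add_sq_of_meanZero hY hY0]
  ring

end SubLinExp

section genV

variable {Ω : Type*} (S : SubLinExp Ω)

theorem genV_nonneg (hind : ∀ A : Set Ω, (A.indicator fun _ => (1 : ℝ)) ∈ S.H) (A : Set Ω) :
    0 ≤ genV S A :=
  S.E_nonneg (hind A) (Set.indicator_nonneg fun _ _ => zero_le_one)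

theorem genV_mono (hind : ∀ A : Set Ω, (A.indicator fun _ => (1 : ℝ)) ∈ S.H) {A B : Set Ω}
    (h : A ⊆ B) : genV S A ≤ genV S B :=
  S.mono _ (hind B) _ (hind A) (Set.indicator_le_indicator_of_subset h fun _ => zero_le_one)

theorem genV_le_E_div (hind : ∀ A : Set Ω, (A.indicator fun _ => (1 : ℝ)) ∈ S.H) {A : Set Ω}
    {f : Ω → ℝ} (hf : f ∈ S.H) (hf0 : ∀ ω, 0 ≤ f ω) {c : ℝ} (hc : 0 < c)
    (hA : ∀ ω ∈ A, c ≤ f ω) : genV S A ≤ S.E f / c := by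
  rw [div_eq_inv_mul, ← S.homog c⁻¹ (inv_nonneg.2 hc.le) f hf]
  refine S.mono _ (S.const_mul_mem _ hf) _ (hind A) fun ω => ?_
  by_cases hω : ω ∈ A
  · simpa [hω, inv_mul_eq_div, le_div_iff₀ hc] using hA ω hω
  · simpa [hω] using mul_nonneg (inv_nonneg.2 hc.le) (hf0 ω)

end genV

section SamplePath

variable {Ω : Type*} (S : SubLinExp Ω) {X : ℕ → Ω → ℝ}

def samplePath (X : ℕ → Ω → ℝ) (ω : Ω) (i : ℕ) : ℝ := X (i + 1) ω

theorem sum_Icc_eq_sum_range_samplePath (ω : Ω) (n : ℕ) :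
    ∑ i ∈ Finset.Icc 1 n, X i ω = ∑ i ∈ Finset.range n, samplePath X ω i := by
  rw [Finset.range_eq_Ico]
  exact (Finset.sum_Ico_add' (X · ω) 0 n 1).symm

theorem zeroExtend_samplePath {k i : ℕ} (ω : Ω) (h : i < k) :
    zeroExtend (fun j : Fin k => X (j + 1) ω) i = samplePath X ω i :=
  zeroExtend_of_lt _ h

theorem SubLinExp.mem_H_of_samplePath (hX : ∀ i, X i ∈ S.H) {k : ℕ} {G : (ℕ → ℝ) → ℝ}
    (hG : LocLip fun x : Fin k → ℝ => G (zeroExtend x))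
    (hGk : ∀ a b : ℕ → ℝ, (∀ i < k, a i = b i) → G a = G b) :
    (fun ω => G (samplePath X ω)) ∈ S.H := by
  convert S.comp_mem k (fun j : Fin k => X (j + 1)) (fun _ => hX _) _ hG using 2 with ω
  exact hGk _ _ fun i hi => (zeroExtend_samplePath ω hi).symm

theorem IndepSeq1.E_samplePath_eq (hindep : IndepSeq1 S X) {k : ℕ} (hk : 1 ≤ k)
    {G : (ℕ → ℝ) → ℝ → ℝ} (hG : LocLip fun q : (Fin k → ℝ) × ℝ => G (zeroExtend q.1) q.2)
    (hGk : ∀ a b : ℕ → ℝ, (∀ i < k, a i = b i) → G a = G b) :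
    S.E (fun ω => G (samplePath X ω) (X (k + 1) ω)) =
      S.E (fun ω => S.E fun ω' => G (samplePath X ω) (X (k + 1) ω')) := by
  have hpath (ω : Ω) : G (zeroExtend fun j : Fin k => X (j + 1) ω) = G (samplePath X ω) :=
    hGk _ _ fun i hi => zeroExtend_samplePath ω hi
  simpa only [hpath] using hindep k hk (fun x y => G (zeroExtend x) y) hG

end SamplePath

section Kolmogorov

variable {Ω : Type*} (S : SubLinExp Ω) {X : ℕ → Ω → ℝ} {e : ℝ} {m k : ℕ}

/-- `X (m + 1) ω + ⋯ + X n ω`. -/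
def pathSum (X : ℕ → Ω → ℝ) (m n : ℕ) (ω : Ω) : ℝ := ∑ i ∈ Finset.Ico m n, samplePath X ω i

noncomputable def pathMax (X : ℕ → Ω → ℝ) (m n : ℕ) (ω : Ω) : ℝ :=
  maxPartialSum (samplePath X ω) m n

theorem pathSum_succ (hmk : m ≤ k) (ω : Ω) :
    pathSum X m (k + 1) ω = pathSum X m k ω + X (k + 1) ω :=
  Finset.sum_Ico_succ_top hmk _

theorem pathMax_succ (ω : Ω) :
    pathMax X m (k + 1) ω = max (pathMax X m k ω) |pathSum X m (k + 1) ω| :=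
  rfl

theorem pathSum_mem (hX : ∀ i, X i ∈ S.H) (m n : ℕ) : pathSum X m n ∈ S.H :=
  S.mem_H_of_samplePath hX
    (LocLip.of_lipschitzWith (lipschitzWith_sum_Ico (lipschitzWith_zeroExtend_apply n) m n))
    fun _ _ h => Finset.sum_congr rfl fun i hi => h i (Finset.mem_Ico.1 hi).2

theorem pathMax_mem (hX : ∀ i, X i ∈ S.H) (m n : ℕ) : pathMax X m n ∈ S.H :=
  S.mem_H_of_samplePath hX
    (LocLip.of_lipschitzWith (lipschitzWith_maxPartialSum (lipschitzWith_zeroExtend_apply n) m n))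
    fun _ _ h => maxPartialSum.congr m h

theorem stoppedSq_path_mem (hX : ∀ i, X i ∈ S.H) (he : 0 < e) (m n : ℕ) :
    (fun ω => stoppedSq e (pathMax X m n ω) (pathSum X m n ω)) ∈ S.H :=
  S.comp_mem₂ (pathMax_mem S hX m n) (pathSum_mem S hX m n) (locLip_stoppedSq he)

theorem locLip_stoppedSq_zeroExtend (he : 0 < e) (m k : ℕ) :
    LocLip fun q : (Fin k → ℝ) × ℝ => stoppedSq e (maxPartialSum (zeroExtend q.1) m k)
      ((∑ i ∈ Finset.Ico m k, zeroExtend q.1 i) + q.2) := by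
  have hF := (lipschitzWith_maxPartialSum (lipschitzWith_zeroExtend_fst_apply k) m k).prodMk
    ((lipschitzWith_sum_Ico (lipschitzWith_zeroExtend_fst_apply k) m k).add LipschitzWith.prod_snd)
  have hF0 : (fun q : (Fin k → ℝ) × ℝ => (maxPartialSum (zeroExtend q.1) m k,
      (∑ i ∈ Finset.Ico m k, zeroExtend q.1 i) + q.2)) 0 = 0 := by
    simp [zeroExtend_zero, maxPartialSum.zero_left]
  exact ((locLip_stoppedSq he).comp_lipschitzWith hF hF0 :)

theorem E_stoppedSq_pathMax_succ_le (hX : ∀ i, X i ∈ S.H) (he : 0 < e) (hmk : m ≤ k) :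
    S.E (fun ω => stoppedSq e (pathMax X m (k + 1) ω) (pathSum X m (k + 1) ω)) ≤
      S.E (fun ω => stoppedSq e (pathMax X m k ω) (pathSum X m k ω + X (k + 1) ω)) := by
  refine S.mono _ (S.comp_mem₂ (pathMax_mem S hX m k) (S.add_mem (pathSum_mem S hX m k) (hX _))
    (locLip_stoppedSq he)) _ (stoppedSq_path_mem S hX he m (k + 1)) fun ω => ?_
  rw [pathMax_succ, pathSum_succ hmk]
  exact stoppedSq_max_abs_le he _ _

theorem E_stoppedSq_pathSum_add_eq (hX : ∀ i, X i ∈ S.H) (hindep : IndepSeq1 S X)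
    (hk0 : S.MeanZero (X (k + 1))) (he : 0 < e) (hk : 1 ≤ k) :
    S.E (fun ω => stoppedSq e (pathMax X m k ω) (pathSum X m k ω + X (k + 1) ω)) =
      S.E (fun ω => stoppedSq e (pathMax X m k ω) (pathSum X m k ω) +
        S.E (fun ω => X (k + 1) ω ^ 2) * (1 - cutoff e (pathMax X m k ω))) := by
  refine (hindep.E_samplePath_eq S hk (G := fun a y => stoppedSq e (maxPartialSum a m k)
    ((∑ i ∈ Finset.Ico m k, a i) + y)) (locLip_stoppedSq_zeroExtend he m k)
    fun a b h => ?_).trans ?_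
  · rw [maxPartialSum.congr m h, Finset.sum_congr rfl fun i hi => h i (Finset.mem_Ico.1 hi).2]
  · simp_rw [S.E_stoppedSq_add_of_meanZero (hX _) hk0]
    rfl

theorem E_stoppedSq_succ_le (hX : ∀ i, X i ∈ S.H) (hindep : IndepSeq1 S X)
    (hk0 : S.MeanZero (X (k + 1))) (he : 0 < e) (hk : 1 ≤ k) (hmk : m ≤ k) :
    S.E (fun ω => stoppedSq e (pathMax X m (k + 1) ω) (pathSum X m (k + 1) ω)) ≤
      S.E (fun ω => stoppedSq e (pathMax X m k ω) (pathSum X m k ω)) +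
        S.E (fun ω => X (k + 1) ω ^ 2) := by
  set w := S.E (fun ω => X (k + 1) ω ^ 2)
  have hw : 0 ≤ w := S.E_nonneg (S.comp_mem₁ (hX _) locLip_sq) fun ω => sq_nonneg _
  have hcut : (fun ω => w * (1 - cutoff e (pathMax X m k ω))) ∈ S.H :=
    S.const_mul_mem w (S.comp_mem₁ (pathMax_mem S hX m k)
      (LocLip.of_lipschitzWith ((LipschitzWith.const 1).sub (lipschitzWith_cutoff he))))
  have hcut_le : S.E (fun ω => w * (1 - cutoff e (pathMax X m k ω))) ≤ w := by
    simpa [S.const] using S.mono _ (S.const_mem w) _ hcut fun ω =>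
      mul_le_of_le_one_right hw (sub_le_self _ (cutoff_nonneg _))
  calc _ ≤ _ := E_stoppedSq_pathMax_succ_le S hX he hmk
    _ = _ := E_stoppedSq_pathSum_add_eq S hX hindep hk0 he hk
    _ ≤ _ := S.subadd _ (stoppedSq_path_mem S hX he m k) _ hcut
    _ ≤ _ := add_le_add_right hcut_le _

theorem E_stoppedSq_le (hX : ∀ i, X i ∈ S.H) (hindep : IndepSeq1 S X)
    (hmean : ∀ i, 1 ≤ i → S.MeanZero (X i)) (he : 0 < e) (hm : 1 ≤ m) {n : ℕ} (hmn : m ≤ n) :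
    S.E (fun ω => stoppedSq e (pathMax X m n ω) (pathSum X m n ω)) ≤
      ∑ i ∈ Finset.Ico m n, S.E (fun ω => X (i + 1) ω ^ 2) := by
  induction n, hmn using Nat.le_induction with
  | base =>
    simp [pathMax, pathSum, maxPartialSum.eq_zero_of_le _ m le_rfl, stoppedSq_zero_zero he, S.const]
  | succ k hmk ih =>
    rw [Finset.sum_Ico_succ_top hmk]
    exact (E_stoppedSq_succ_le S hX hindep (hmean _ (by omega)) he (by omega) hmk).trans
      (add_le_add ih le_rfl)

theorem genV_pathMax_ge_le (hind : ∀ A : Set Ω, (A.indicator fun _ => (1 : ℝ)) ∈ S.H)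
    (hX : ∀ i, X i ∈ S.H) (hindep : IndepSeq1 S X) (hmean : ∀ i, 1 ≤ i → S.MeanZero (X i))
    (he : 0 < e) (hm : 1 ≤ m) {n : ℕ} (hmn : m ≤ n) :
    genV S {ω | e ≤ pathMax X m n ω} ≤
      (∑ i ∈ Finset.Ico m n, S.E (fun ω => X (i + 1) ω ^ 2)) / (e / 2) ^ 2 :=
  (genV_le_E_div S hind (stoppedSq_path_mem S hX he m n) (fun _ => stoppedSq_nonneg _ _)
    (by positivity) fun _ hω => (stoppedSq_of_le he hω _).ge).trans
    (div_le_div_of_nonneg_right (E_stoppedSq_le S hX hindep hmean he hm hmn) (by positivity))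

end Kolmogorov

theorem ContCapacity.iUnion_eq_zero {Ω : Type*} {V : Set Ω → ℝ} (hV : ContCapacity V)
    {A : ℕ → Set Ω} (hA : Monotone A) (h0 : ∀ n, V (A n) = 0) : V (⋃ n, A n) = 0 :=
  tendsto_nhds_unique (hV.1 A hA) (by simp [h0])

theorem exists_one_div_le_maxPartialSum_of_not_tendsto {a : ℕ → ℝ}
    (h : ¬∃ L, Tendsto (fun n => ∑ i ∈ Finset.range n, a i) atTop (nhds L)) :
    ∃ j : ℕ, ∀ m, ∃ n, 1 / ((j : ℝ) + 1) ≤ maxPartialSum a m n := by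
  have hC : ¬CauchySeq fun n => ∑ i ∈ Finset.range n, a i :=
    fun hC => h (cauchySeq_tendsto_of_complete hC)
  rw [Metric.cauchySeq_iff'] at hC
  push Not at hC
  obtain ⟨ε, hε, hfar⟩ := hC
  obtain ⟨j, hj⟩ := exists_nat_one_div_lt hε
  refine ⟨j, fun m => ?_⟩
  obtain ⟨n, hmn, hdist⟩ := hfar m
  refine ⟨n, hj.le.trans (hdist.trans ?_)⟩
  rw [Real.dist_eq, ← Finset.sum_Ico_eq_sub _ hmn]
  exact maxPartialSum.abs_sum_le a m le_rfl

section Tail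

variable {Ω : Type*} (S : SubLinExp Ω) {X : ℕ → Ω → ℝ} {e : ℝ}

theorem genV_iUnion_pathMax_ge_le
    (hind : ∀ A : Set Ω, (A.indicator fun _ => (1 : ℝ)) ∈ S.H) (hcont : ContCapacity (genV S))
    (hX : ∀ i, X i ∈ S.H) (hindep : IndepSeq1 S X) (hmean : ∀ i, 1 ≤ i → S.MeanZero (X i))
    (hsum : Summable fun i : ℕ => S.E fun ω => X (i + 1) ω ^ 2) (he : 0 < e) {m : ℕ} (hm : 1 ≤ m) :
    genV S (⋃ n, {ω | e ≤ pathMax X m n ω}) ≤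
      ((∑' i, S.E fun ω => X (i + 1) ω ^ 2) - ∑ i ∈ Finset.range m, S.E fun ω => X (i + 1) ω ^ 2) /
        (e / 2) ^ 2 := by
  have hmono : Monotone fun n => {ω | e ≤ pathMax X m n ω} := fun _ _ h =>
    Set.ofPred_subset_ofPred.2 fun _ hω => hω.trans (maxPartialSum.monotone _ m h)
  refine le_of_tendsto (hcont.1 _ hmono) ?_
  filter_upwards [eventually_ge_atTop m] with n hmn
  refine (genV_pathMax_ge_le S hind hX hindep hmean he hm hmn).trans ?_
  gcongr
  rw [Finset.sum_Ico_eq_sub _ hmn]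
  gcongr
  exact hsum.sum_le_tsum _ fun i _ => S.E_nonneg (S.comp_mem₁ (hX _) locLip_sq) fun _ => sq_nonneg _

theorem genV_iInter_iUnion_pathMax_ge_eq_zero
    (hind : ∀ A : Set Ω, (A.indicator fun _ => (1 : ℝ)) ∈ S.H) (hcont : ContCapacity (genV S))
    (hX : ∀ i, X i ∈ S.H) (hindep : IndepSeq1 S X) (hmean : ∀ i, 1 ≤ i → S.MeanZero (X i))
    (hsum : Summable fun i : ℕ => S.E fun ω => X (i + 1) ω ^ 2) (he : 0 < e) :
    genV S (⋂ m, ⋃ n, {ω | e ≤ pathMax X m n ω}) = 0 := by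
  have htail : Tendsto (fun m => ((∑' i, S.E fun ω => X (i + 1) ω ^ 2) -
      ∑ i ∈ Finset.range m, S.E fun ω => X (i + 1) ω ^ 2) / (e / 2) ^ 2) atTop (nhds 0) := by
    have := (hsum.hasSum.tendsto_sum_nat.const_sub
      (∑' i, S.E fun ω => X (i + 1) ω ^ 2)).div_const ((e / 2) ^ 2)
    rwa [sub_self, zero_div] at this
  refine le_antisymm (ge_of_tendsto htail ?_) (genV_nonneg S hind _)
  filter_upwards [eventually_ge_atTop 1] with m hm
  exact (genV_mono S hind (Set.iInter_subset _ m)).trans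
    (genV_iUnion_pathMax_ge_le S hind hcont hX hindep hmean hsum he hm)

theorem setOf_not_tendsto_subset_iUnion_iInter_iUnion (X : ℕ → Ω → ℝ) :
    {ω | ¬∃ L : ℝ, Tendsto (fun n : ℕ => ∑ i ∈ Finset.Icc 1 n, X i ω) atTop (nhds L)} ⊆
      ⋃ j : ℕ, ⋂ m, ⋃ n, {ω | 1 / ((j : ℝ) + 1) ≤ pathMax X m n ω} := fun ω hω => by
  obtain ⟨j, hj⟩ := exists_one_div_le_maxPartialSum_of_not_tendsto (a := samplePath X ω)
    (by simpa only [Set.mem_ofPred_eq, sum_Icc_eq_sum_range_samplePath] using hω)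
  simp only [pathMax, Set.mem_iUnion, Set.mem_iInter, Set.mem_ofPred_eq]
  exact ⟨j, hj⟩

end Tail

theorem random_series_converges_general {Ω : Type*} (S : SubLinExp Ω)
    (hind : ∀ A : Set Ω, (A.indicator fun _ => (1 : ℝ)) ∈ S.H)
    (hcont : ContCapacity (genV S))
    (X : ℕ → Ω → ℝ) (hX : ∀ i, X i ∈ S.H)
    (hindep : IndepSeq1 S X)
    (hmean : ∀ i, 1 ≤ i → S.E (X i) = 0 ∧ S.E (fun ω => -X i ω) = 0)
    (hsum : Summable fun i : ℕ => S.E fun ω => (X (i + 1) ω) ^ 2) :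
    genV S {ω | ¬ ∃ L : ℝ,
      Tendsto (fun n : ℕ => ∑ i ∈ Finset.Icc 1 n, X i ω) atTop (nhds L)} = 0 := by
  set D : ℕ → Set Ω := fun j => ⋂ m, ⋃ n, {ω | 1 / ((j : ℝ) + 1) ≤ pathMax X m n ω}
  have hD : Monotone D := fun _ _ h => Set.iInter_mono fun _ => Set.iUnion_mono fun _ =>
    Set.ofPred_subset_ofPred.2 fun _ => (Nat.one_div_le_one_div h).trans
  have hzero : genV S (⋃ j, D j) = 0 := hcont.iUnion_eq_zero hD fun _ =>
    genV_iInter_iUnion_pathMax_ge_eq_zero S hind hcont hX hindep hmean hsum (by positivity)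
  exact le_antisymm
    (hzero ▸ genV_mono S hind (setOf_not_tendsto_subset_iUnion_iInter_iUnion X))
    (genV_nonneg S hind _)

/-- Convergence of random series: if `{Xᵢ}` are independent with
`Ê(Xᵢ) = ε̂(Xᵢ) = 0` and `Σᵢ Ê(Xᵢ²) < ∞`, and `Ê` is regular with continuous
generated capacity `V`, then `Σᵢ Xᵢ` converges a.s. `V`. -/
theorem random_series_converges {Ω : Type*} (S : SubLinExp Ω)
    (hreg : Regular S)
    (hind : ∀ A : Set Ω, (A.indicator fun _ => (1 : ℝ)) ∈ S.H)
    (hcont : ContCapacity (genV S))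
    (X : ℕ → Ω → ℝ) (hX : ∀ i, X i ∈ S.H)
    (hindep : IndepSeq1 S X)
    (hmean : ∀ i, 1 ≤ i → S.E (X i) = 0 ∧ S.E (fun ω => -X i ω) = 0)
    (hsum : Summable fun i : ℕ => S.E fun ω => (X (i + 1) ω) ^ 2) :
    genV S {ω | ¬ ∃ L : ℝ,
      Tendsto (fun n : ℕ => ∑ i ∈ Finset.Icc 1 n, X i ω) atTop (nhds L)} = 0 :=
  random_series_converges_general S hind hcont X hX hindep hmean hsum
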